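/- Let G be a finite group and let g ∈ G with g ≠ 1. Let κ be the rational conjugacy class of g, and suppose that the complement G ∖ κ is the underlying set of a subgroup of G. Then every normal subgroup N of G with N ∩ κ ≠ ∅ equals G; in other words, no proper normal subgroup of G contains any element of κ. -/

import Mathlib

/-!
A normal subgroup `N` meeting `κ` contains some `g ^ k` with `k` prime to the order of `g`,
hence `g` itself (a power of `g ^ k`), hence all of `κ`. So `N` contains the complement of the
subgroup `H = G ∖ κ`, which is proper because `g ∉ H`; and a group is never the union of two
proper subgroups.
-/

/-- The rational conjugacy class of `g` in `G`: all elements conjugate to `g ^ k`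
for some `k` coprime to the order of `g`. -/
def rationalClass {G : Type*} [Group G] (g : G) : Set G :=
  {h : G | ∃ k : ℕ, k.Coprime (orderOf g) ∧ IsConj (g ^ k) h}

section

variable {G : Type*} [Group G]

lemma self_mem_rationalClass (g : G) : g ∈ rationalClass g :=
  ⟨1, Nat.coprime_one_left _, by rw [pow_one]⟩

lemma Subgroup.Normal.mem_of_isConj {N : Subgroup G} (hN : N.Normal) {a b : G}
    (hab : IsConj a b) (ha : a ∈ N) : b ∈ N := by
  obtain ⟨c, rfl⟩ := isConj_iff.mp hab
  exact hN.conj_mem a ha c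

lemma Subgroup.Normal.rationalClass_subset {N : Subgroup G} (hN : N.Normal) {g : G}
    (hmeet : ((N : Set G) ∩ rationalClass g).Nonempty) : rationalClass g ⊆ N := by
  obtain ⟨x, hxN, k, hk, hconj⟩ := hmeet
  have hgk : g ^ k ∈ N := hN.mem_of_isConj hconj.symm hxN
  have hg : g ∈ N := by
    obtain ⟨m, hm⟩ := exists_pow_eq_self_of_coprime hk
    exact hm ▸ pow_mem hgk m
  rintro y ⟨j, -, hy⟩
  exact hN.mem_of_isConj hy (pow_mem hg j)

lemma Subgroup.eq_top_of_compl_subset {H N : Subgroup G} (hH : H ≠ ⊤)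
    (hHN : (H : Set G)ᶜ ⊆ N) : N = ⊤ := by
  have hcover : ((⊤ : Subgroup G) : Set G) ⊆ N ∪ H := fun x _ ↦ by
    by_cases hx : x ∈ H
    · exact Or.inr hx
    · exact Or.inl (hHN hx)
  rcases SubgroupClass.subset_union.mp hcover with hN | hH'
  · exact top_le_iff.mp hN
  · exact absurd (top_le_iff.mp hH') hH

end

theorem normal_subgroup_meeting_rationalClass_eq_top_general
    {G : Type*} [Group G] (g : G)
    (hκ : ∃ H : Subgroup G, (H : Set G) = (rationalClass g)ᶜ)
    (N : Subgroup G) (hN : N.Normal)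
    (hmeet : ((N : Set G) ∩ rationalClass g).Nonempty) :
    N = ⊤ := by
  obtain ⟨H, hH⟩ := hκ
  have hgH : g ∉ H := by
    rw [← SetLike.mem_coe, hH, Set.notMem_compl_iff]
    exact self_mem_rationalClass g
  have hH_ne_top : H ≠ ⊤ := fun hH_top ↦ hgH (hH_top ▸ Subgroup.mem_top g)
  apply Subgroup.eq_top_of_compl_subset hH_ne_top
  rw [hH, compl_compl]
  exact hN.rationalClass_subset hmeet

/-- If `g ≠ 1` and the complement of the rational conjugacy class `κ` of `g` is the
underlying set of a subgroup of `G`, then every normal subgroup of the finite group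
`G` meeting `κ` is all of `G`. -/
theorem normal_subgroup_meeting_rationalClass_eq_top
    {G : Type*} [Group G] [Finite G] (g : G) (hg : g ≠ 1)
    (hκ : ∃ H : Subgroup G, (H : Set G) = (rationalClass g)ᶜ)
    (N : Subgroup G) (hN : N.Normal)
    (hmeet : ((N : Set G) ∩ rationalClass g).Nonempty) :
    N = ⊤ :=
  normal_subgroup_meeting_rationalClass_eq_top_general g hκ N hN hmeet
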